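/- Let 0 < a, 0 < b, with a + b < 1, and let u : [0,∞) → ℝ satisfy u(0) = 0 and the Hölder estimate |u(x) − u(y)| ≤ C|x − y|^{a+b} for all x, y ≥ 0. Define v(x) = u(x)/x^a for x > 0 and v(0) = 0. Then v is Hölder continuous of order b: there exists C′ > 0 with |v(x) − v(y)| ≤ C′|x − y|^b for all x, y ≥ 0. -/
import Mathlib


/-- One-dimensional core of Lemma A.5 (`Ċ^{a+b} ⊂ d^a Ċ^b`): if `u` vanishes at `0`
and is Hölder of order `a+b < 1` on `[0,∞)`, then `v(x) = u(x)/x^a` is Hölder of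
order `b` on `[0,∞)`. -/
theorem stmt8
    (a b : ℝ) (ha : 0 < a) (hb : 0 < b) (hab : a + b < 1)
    (C : ℝ) (hC : 0 < C) (u : ℝ → ℝ) (hu0 : u 0 = 0)
    (hu : ∀ x y : ℝ, 0 ≤ x → 0 ≤ y → |u x - u y| ≤ C * |x - y| ^ (a + b)) :
    ∃ C' : ℝ, 0 < C' ∧ ∀ x y : ℝ, 0 ≤ x → 0 ≤ y →
      |u x / x ^ a - u y / y ^ a| ≤ C' * |x - y| ^ b := by
  have hb1 : b < 1 := by linarith
  refine ⟨2 * C, by positivity, ?_⟩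
  have hbd : ∀ z : ℝ, 0 ≤ z → |u z| ≤ C * z ^ (a + b) := by
    intro z hz
    simpa [hu0, abs_of_nonneg hz] using hu z 0 hz le_rfl
  have key : ∀ x y : ℝ, 0 ≤ y → y < x →
      |u x / x ^ a - u y / y ^ a| ≤ 2 * C * (x - y) ^ b := by
    intro x y hy hyx
    have hx : (0:ℝ) < x := lt_of_le_of_lt hy hyx
    have hh0 : (0:ℝ) < x - y := by linarith
    have hxa : (0:ℝ) < x ^ a := Real.rpow_pos_of_pos hx a
    have hhb : (0:ℝ) < (x - y) ^ b := Real.rpow_pos_of_pos hh0 b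
    rcases eq_or_lt_of_le hy with hy0 | hy0
    · -- y = 0
      have h1 : u y / y ^ a = 0 := by rw [← hy0]; simp [hu0]
      have h2 : |u x| ≤ C * x ^ (a + b) := hbd x hx.le
      rw [h1, sub_zero, abs_div, abs_of_pos hxa, div_le_iff₀ hxa]
      have hx0 : x ^ (a + b) = x ^ a * x ^ b := Real.rpow_add hx a b
      have hxeq : x - y = x := by rw [← hy0, sub_zero]
      rw [hxeq]
      have hxb : (0:ℝ) < x ^ b := Real.rpow_pos_of_pos hx b
      calc |u x| ≤ C * x ^ (a + b) := h2
        _ = C * x ^ b * x ^ a := by rw [hx0]; ring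
        _ ≤ 2 * C * x ^ b * x ^ a := by
            have := mul_pos (mul_pos hC hxb) hxa
            linarith
    · -- 0 < y
      have hya : (0:ℝ) < y ^ a := Real.rpow_pos_of_pos hy0 a
      have hyxa : y ^ a ≤ x ^ a := Real.rpow_le_rpow hy0.le hyx.le ha.le
      have hfrac : 0 ≤ (x ^ a - y ^ a) / (x ^ a * y ^ a) :=
        div_nonneg (by linarith) (by positivity)
      have edec : u x / x ^ a - u y / y ^ a
          = (u x - u y) / x ^ a - u y * ((x ^ a - y ^ a) / (x ^ a * y ^ a)) := by
        field_simp
        ring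
      -- Term 1
      have hhx : x - y ≤ x := by linarith
      have t1 : |u x - u y| / x ^ a ≤ C * (x - y) ^ b := by
        have h1 : |u x - u y| ≤ C * (x - y) ^ (a + b) := by
          have := hu x y hx.le hy0.le
          rwa [abs_of_pos hh0] at this
        have h2 : (x - y) ^ (a + b) = (x - y) ^ a * (x - y) ^ b :=
          Real.rpow_add hh0 a b
        have h3 : (x - y) ^ a ≤ x ^ a := Real.rpow_le_rpow hh0.le hhx ha.le
        rw [div_le_iff₀ hxa]
        calc |u x - u y| ≤ C * ((x - y) ^ a * (x - y) ^ b) := by rw [← h2]; exact h1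
          _ = C * (x - y) ^ b * (x - y) ^ a := by ring
          _ ≤ C * (x - y) ^ b * x ^ a := by gcongr
      -- Term 2
      have t2 : |u y| * ((x ^ a - y ^ a) / (x ^ a * y ^ a)) ≤ C * (x - y) ^ b := by
        have hub : |u y| ≤ C * (y ^ a * y ^ b) := by
          have := hbd y hy0.le
          rwa [Real.rpow_add hy0] at this
        have hyb : (0:ℝ) < y ^ b := Real.rpow_pos_of_pos hy0 b
        have main : y ^ b * (x ^ a - y ^ a) ≤ (x - y) ^ b * x ^ a := by
          rcases le_total y (x - y) with hyh | hhy
          · -- y ≤ x - y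
            have h1 : y ^ b ≤ (x - y) ^ b := Real.rpow_le_rpow hy0.le hyh hb.le
            have h2 : x ^ a - y ^ a ≤ x ^ a := by linarith
            exact mul_le_mul h1 h2 (by linarith) hhb.le
          · -- x - y ≤ y
            have hy1 : y ^ (a - 1) * y = y ^ a := by
              rw [Real.rpow_sub hy0, Real.rpow_one, div_mul_cancel₀ _ hy0.ne']
            have hya1 : (0:ℝ) < y ^ (a - 1) := Real.rpow_pos_of_pos hy0 _
            have hcon : x ^ a ≤ y ^ a + y ^ (a - 1) * (x - y) := by
              have e2 : x ^ a = y ^ a * (x / y) ^ a := by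
                rw [← Real.mul_rpow hy0.le (by positivity : (0:ℝ) ≤ x / y),
                    mul_div_cancel₀ _ hy0.ne']
              have e3 : (x / y) ^ a ≤ x / y := by
                have h1 : (1:ℝ) ≤ x / y := (one_le_div hy0).2 hyx.le
                calc (x / y) ^ a ≤ (x / y) ^ (1:ℝ) :=
                      Real.rpow_le_rpow_of_exponent_le h1 (by linarith)
                  _ = x / y := Real.rpow_one _
              have e4 : y ^ a * (x / y) = y ^ (a - 1) * x := by
                rw [← hy1]; field_simp
              calc x ^ a = y ^ a * (x / y) ^ a := e2
                _ ≤ y ^ a * (x / y) := mul_le_mul_of_nonneg_left e3 hya.le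
                _ = y ^ (a - 1) * x := e4
                _ = y ^ (a - 1) * y + y ^ (a - 1) * (x - y) := by ring
                _ = y ^ a + y ^ (a - 1) * (x - y) := by rw [hy1]
            have hsplit : x - y = (x - y) ^ b * (x - y) ^ (1 - b) := by
              rw [← Real.rpow_add hh0]
              norm_num
            have h4 : (x - y) ^ (1 - b) ≤ y ^ (1 - b) :=
              Real.rpow_le_rpow hh0.le hhy (by linarith)
            have h5 : y ^ b * y ^ (a - 1) * y ^ (1 - b) = y ^ a := by
              rw [← Real.rpow_add hy0, ← Real.rpow_add hy0]
              ring_nf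
            have claim2 : y ^ b * (y ^ (a - 1) * (x - y)) ≤ (x - y) ^ b * y ^ a := by
              have hq1 : (0:ℝ) < (x - y) ^ (1 - b) := Real.rpow_pos_of_pos hh0 _
              calc y ^ b * (y ^ (a - 1) * (x - y))
                  = (y ^ b * y ^ (a - 1)) * ((x - y) ^ b * (x - y) ^ (1 - b)) := by
                    rw [← hsplit]; ring
                _ ≤ (y ^ b * y ^ (a - 1)) * ((x - y) ^ b * y ^ (1 - b)) := by
                    gcongr
                _ = (x - y) ^ b * (y ^ b * y ^ (a - 1) * y ^ (1 - b)) := by ring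
                _ = (x - y) ^ b * y ^ a := by rw [h5]
            have hxy2 : x ^ a - y ^ a ≤ y ^ (a - 1) * (x - y) := by linarith
            calc y ^ b * (x ^ a - y ^ a) ≤ y ^ b * (y ^ (a - 1) * (x - y)) :=
                  mul_le_mul_of_nonneg_left hxy2 hyb.le
              _ ≤ (x - y) ^ b * y ^ a := claim2
              _ ≤ (x - y) ^ b * x ^ a := mul_le_mul_of_nonneg_left hyxa hhb.le
        calc |u y| * ((x ^ a - y ^ a) / (x ^ a * y ^ a))
            ≤ (C * (y ^ a * y ^ b)) * ((x ^ a - y ^ a) / (x ^ a * y ^ a)) :=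
              mul_le_mul_of_nonneg_right hub hfrac
          _ = C * (y ^ b * (x ^ a - y ^ a)) / x ^ a := by field_simp
          _ ≤ C * ((x - y) ^ b * x ^ a) / x ^ a := by gcongr
          _ = C * (x - y) ^ b := by field_simp
      rw [edec]
      calc |(u x - u y) / x ^ a - u y * ((x ^ a - y ^ a) / (x ^ a * y ^ a))|
          ≤ |(u x - u y) / x ^ a| + |u y * ((x ^ a - y ^ a) / (x ^ a * y ^ a))| :=
            abs_sub _ _
        _ = |u x - u y| / x ^ a + |u y| * ((x ^ a - y ^ a) / (x ^ a * y ^ a)) := by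
            rw [abs_div, abs_mul, abs_of_pos hxa, abs_of_nonneg hfrac]
        _ ≤ C * (x - y) ^ b + C * (x - y) ^ b := add_le_add t1 t2
        _ = 2 * C * (x - y) ^ b := by ring
  intro x y hx hy
  rcases lt_trichotomy y x with h1 | h1 | h1
  · rw [abs_of_pos (by linarith : (0:ℝ) < x - y)]
    exact key x y hy h1
  · subst h1
    simp [Real.zero_rpow hb.ne']
  · rw [abs_sub_comm (u x / x ^ a), abs_sub_comm x y,
        abs_of_pos (by linarith : (0:ℝ) < y - x)]
    exact key y x hx h1
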